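/- arXiv:0909.1352 — 2 statements merged into one kernel-verified Lean document; each statement's English description precedes it below -/
import Mathlib

section
/- Let X be a standard normal random variable. Then there is a finite constant c_G such that for all extended reals −∞ ≤ a < b ≤ ∞, E|X∧b∨a − E[X∧b∨a]| ≤ c_G · P(a < X < b), where X∧b∨a denotes min(max(X,a),b) (the truncation of X to [a,b]). -/
open MeasureTheory ProbabilityTheory

/-- Truncation `x ∧ b ∨ a` of a real number `x` to the (extended-real) interval `[a, b]`. -/
noncomputable def truncE (x : ℝ) (a b : EReal) : ℝ :=
  (min (max (x : EReal) a) b).toReal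

/-!
With `S = {t | a < t < b}`, the truncation `g = truncE · a b` satisfies
`|g x - g 0| = λ(S ∩ Ι 0 x)`, so by Tonelli `E |g X - g 0| = ∫_S P(Ι 0 X ∋ t) dt`.
For `t > 0` the event `t ∈ Ι 0 X` is `X ≥ t`, whose probability is at most
`exp (-t² / 2) = √(2π) φ(t)` by the Chernoff bound (symmetrically for `t ≤ 0`),
hence `E |g X - g 0| ≤ √(2π) P(X ∈ S)`. Replacing `g 0` by `E g X` costs a factor `2`.
-/

open Real Set
open scoped ENNReal Interval

lemma gaussianReal_real_Ici_le {t : ℝ} (ht : 0 ≤ t) :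
    (gaussianReal 0 1).real (Ici t) ≤ exp (-t ^ 2 / 2) := by
  have h := measure_ge_le_exp_mul_mgf (X := id) (μ := gaussianReal 0 1) t ht
    (integrable_exp_mul_gaussianReal t)
  rw [mgf_id_gaussianReal, ← exp_add] at h
  refine h.trans_eq (congrArg exp ?_)
  push_cast
  ring

lemma gaussianReal_real_Iic_le {t : ℝ} (ht : t ≤ 0) :
    (gaussianReal 0 1).real (Iic t) ≤ exp (-t ^ 2 / 2) := by
  have h_symm : (gaussianReal 0 1).real (Iic t) = (gaussianReal 0 1).real (Ici (-t)) := by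
    conv_rhs => rw [← neg_zero, ← gaussianReal_map_neg]
    rw [map_measureReal_apply measurable_neg measurableSet_Ici]
    congr 1
    ext x
    simp
  rw [h_symm, ← neg_sq]
  exact gaussianReal_real_Ici_le (neg_nonneg.mpr ht)

lemma gaussianReal_setOf_mem_uIoc_zero_le (t : ℝ) :
    gaussianReal 0 1 {x | t ∈ Ι 0 x} ≤ ENNReal.ofReal (exp (-t ^ 2 / 2)) := by
  rcases lt_or_ge 0 t with ht | ht
  · calc gaussianReal 0 1 {x | t ∈ Ι 0 x} ≤ gaussianReal 0 1 (Ici t) :=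
          measure_mono fun x hx => by
            rcases mem_uIoc.mp hx with h | h <;> simp only [mem_Ici] <;> linarith
      _ ≤ _ := by
          rw [← ofReal_measureReal]
          exact ENNReal.ofReal_le_ofReal (gaussianReal_real_Ici_le ht.le)
  · calc gaussianReal 0 1 {x | t ∈ Ι 0 x} ≤ gaussianReal 0 1 (Iic t) :=
          measure_mono fun x hx => by
            rcases mem_uIoc.mp hx with h | h <;> simp only [mem_Iic] <;> linarith
      _ ≤ _ := by
          rw [← ofReal_measureReal]
          exact ENNReal.ofReal_le_ofReal (gaussianReal_real_Iic_le ht)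

lemma exp_neg_sq_div_two_eq_mul_gaussianPDFReal (t : ℝ) :
    exp (-t ^ 2 / 2) = √(2 * π) * gaussianPDFReal 0 1 t := by
  rw [gaussianPDFReal_def]
  simp only [NNReal.coe_one, mul_one, sub_zero]
  field_simp

lemma lintegral_volume_inter_uIoc_zero (μ : Measure ℝ) [SFinite μ] {S : Set ℝ}
    (hS : MeasurableSet S) :
    ∫⁻ x, volume (S ∩ Ι 0 x) ∂μ = ∫⁻ t in S, μ {x | t ∈ Ι 0 x} := by
  set T : Set (ℝ × ℝ) := {p | p.2 ∈ S ∧ p.2 ∈ Ι 0 p.1}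
  have hT : MeasurableSet T :=
    (hS.preimage measurable_snd).inter <|
      (measurableSet_lt (f := fun p : ℝ × ℝ => min 0 p.1) (by fun_prop) (by fun_prop)).inter
        (measurableSet_le (g := fun p : ℝ × ℝ => max 0 p.1) (by fun_prop) (by fun_prop))
  rw [← lintegral_indicator hS]
  calc ∫⁻ x, volume (S ∩ Ι 0 x) ∂μ = μ.prod volume T := (Measure.prod_apply hT).symm
    _ = _ := by
      rw [Measure.prod_apply_symm hT]
      congr 1
      ext t
      by_cases ht : t ∈ S <;> simp [ht, T]

lemma gaussianReal_lintegral_volume_inter_uIoc_zero_le {S : Set ℝ} (hS : MeasurableSet S) :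
    ∫⁻ x, volume (S ∩ Ι 0 x) ∂gaussianReal 0 1
      ≤ ENNReal.ofReal √(2 * π) * gaussianReal 0 1 S := by
  rw [lintegral_volume_inter_uIoc_zero _ hS, gaussianReal_apply 0 one_ne_zero,
    ← lintegral_const_mul _ (measurable_gaussianPDF 0 1)]
  refine setLIntegral_mono (by fun_prop) fun t _ => ?_
  rw [gaussianPDF, ← ENNReal.ofReal_mul (by positivity),
    ← exp_neg_sq_div_two_eq_mul_gaussianPDFReal]
  exact gaussianReal_setOf_mem_uIoc_zero_le t

lemma integral_abs_sub_integral_le {Ω : Type*} [MeasurableSpace Ω] {μ : Measure Ω}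
    [IsProbabilityMeasure μ] {f : Ω → ℝ} (hf : Integrable f μ) :
    ∫ ω, |f ω - ∫ ω', f ω' ∂μ| ∂μ ≤ 2 * ∫ ω, |f ω| ∂μ := by
  have hmean : |∫ ω, f ω ∂μ| ≤ ∫ ω, |f ω| ∂μ := abs_integral_le_integral_abs
  calc ∫ ω, |f ω - ∫ ω', f ω' ∂μ| ∂μ ≤ ∫ ω, (|f ω| + |∫ ω', f ω' ∂μ|) ∂μ :=
        integral_mono (hf.sub (integrable_const _)).abs (hf.abs.add (integrable_const _))
          fun ω => abs_sub _ _
    _ = ∫ ω, |f ω| ∂μ + |∫ ω, f ω ∂μ| := by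
        rw [integral_add hf.abs (integrable_const _), integral_const, probReal_univ, one_smul]
    _ ≤ 2 * ∫ ω, |f ω| ∂μ := by linarith

lemma gaussianReal_integral_abs_sub_integral_le {g : ℝ → ℝ} {S : Set ℝ} (hS : MeasurableSet S)
    (hg : Measurable g) (hgS : ∀ x, |g x - g 0| ≤ (volume (S ∩ Ι 0 x)).toReal) :
    ∫ x, |g x - ∫ y, g y ∂gaussianReal 0 1| ∂gaussianReal 0 1
      ≤ 2 * √(2 * π) * (gaussianReal 0 1 S).toReal := by
  set γ := gaussianReal 0 1
  have hlint : ∫⁻ x, ENNReal.ofReal |g x - g 0| ∂γ ≤ ENNReal.ofReal √(2 * π) * γ S :=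
    (lintegral_mono fun x => ENNReal.ofReal_le_of_le_toReal (hgS x)).trans
      (gaussianReal_lintegral_volume_inter_uIoc_zero_le hS)
  have hfin : ENNReal.ofReal √(2 * π) * γ S ≠ ∞ :=
    ENNReal.mul_ne_top ENNReal.ofReal_ne_top (measure_ne_top γ S)
  have hint : Integrable (fun x => g x - g 0) γ := by
    refine ⟨(hg.sub measurable_const).aestronglyMeasurable, ?_⟩
    simp_rw [HasFiniteIntegral, Real.enorm_eq_ofReal_abs]
    exact hlint.trans_lt hfin.lt_top
  have hL1 : ∫ x, |g x - g 0| ∂γ ≤ √(2 * π) * (γ S).toReal := by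
    rw [integral_eq_lintegral_of_nonneg_ae (ae_of_all _ fun x => abs_nonneg _)
      hint.abs.aestronglyMeasurable]
    refine (ENNReal.toReal_mono hfin hlint).trans_eq ?_
    rw [ENNReal.toReal_mul, ENNReal.toReal_ofReal (sqrt_nonneg _)]
  have hmean : ∫ x, g x ∂γ - g 0 = ∫ x, (g x - g 0) ∂γ := by
    have hgi : Integrable g γ :=
      (hint.add (integrable_const (g 0))).congr (ae_of_all _ fun x => sub_add_cancel (g x) (g 0))
    rw [integral_sub hgi (integrable_const _), integral_const, probReal_univ, one_smul]
  calc ∫ x, |g x - ∫ y, g y ∂γ| ∂γ = ∫ x, |(g x - g 0) - ∫ y, (g y - g 0) ∂γ| ∂γ := by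
        simp_rw [← hmean, sub_sub_sub_cancel_right]
    _ ≤ 2 * ∫ x, |g x - g 0| ∂γ := integral_abs_sub_integral_le hint
    _ ≤ 2 * √(2 * π) * (γ S).toReal := by linarith

section LinearOrder

variable {α : Type*} [LinearOrder α] {a b t x y : α}

lemma lt_and_lt_of_min_max_lt_of_lt_min_max (hx : min (max x a) b < t)
    (hy : t < min (max y a) b) : (x < t ∧ t < y) ∧ a < t ∧ t < b := by
  simp only [min_lt_iff, max_lt_iff, lt_min_iff, lt_max_iff] at hx hy
  grind

lemma min_max_le_and_le_min_max (hxt : x ≤ t) (hty : t ≤ y) (hat : a ≤ t) (htb : t ≤ b) :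
    min (max x a) b ≤ t ∧ t ≤ min (max y a) b :=
  ⟨min_le_of_left_le (max_le hxt hat), le_min (le_max_of_le_left hty) htb⟩

end LinearOrder

section truncE

variable {a b : EReal}

lemma coe_truncE (hab : a < b) (x : ℝ) : (truncE x a b : EReal) = min (max (x : EReal) a) b := by
  refine EReal.coe_toReal ?_ ?_
  · exact ((min_le_left _ _).trans_lt (max_lt (EReal.coe_lt_top x) (hab.trans_le le_top))).ne
  · exact (lt_min ((EReal.bot_lt_coe x).trans_le (le_max_left _ _)) (bot_le.trans_lt hab)).ne'

lemma monotone_truncE (hab : a < b) : Monotone (truncE · a b) := fun x y hxy => by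
  rw [← EReal.coe_le_coe_iff, coe_truncE hab, coe_truncE hab]
  exact min_le_min_right _ (max_le_max_right _ (EReal.coe_le_coe_iff.mpr hxy))

/-- `{t | a < t < b} ∩ Ioc x y` is squeezed between the open and the closed interval with
endpoints `truncE x a b` and `truncE y a b`. -/
lemma volume_inter_Ioc_eq_ofReal_truncE_sub (hab : a < b) (x y : ℝ) :
    volume ({t : ℝ | a < t ∧ t < b} ∩ Ioc x y)
      = ENNReal.ofReal (truncE y a b - truncE x a b) := by
  refine le_antisymm ?_ ?_
  · calc volume ({t : ℝ | a < t ∧ t < b} ∩ Ioc x y)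
        ≤ volume (Icc (truncE x a b) (truncE y a b)) :=
          measure_mono fun t ⟨⟨hat, htb⟩, hxt, hty⟩ => by
            have h := min_max_le_and_le_min_max (EReal.coe_le_coe_iff.mpr hxt.le)
              (EReal.coe_le_coe_iff.mpr hty) hat.le htb.le
            rw [← coe_truncE hab, ← coe_truncE hab] at h
            exact ⟨EReal.coe_le_coe_iff.mp h.1, EReal.coe_le_coe_iff.mp h.2⟩
      _ = _ := Real.volume_Icc
  · rw [← Real.volume_Ioo]
    refine measure_mono fun t ⟨hxt, hty⟩ => ?_
    rw [← EReal.coe_lt_coe_iff, coe_truncE hab] at hxt hty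
    obtain ⟨⟨hxt, hty⟩, hat, htb⟩ := lt_and_lt_of_min_max_lt_of_lt_min_max hxt hty
    exact ⟨⟨hat, htb⟩, EReal.coe_lt_coe_iff.mp hxt, (EReal.coe_lt_coe_iff.mp hty).le⟩

lemma abs_truncE_sub_eq (hab : a < b) (x y : ℝ) :
    |truncE x a b - truncE y a b| = (volume ({t : ℝ | a < t ∧ t < b} ∩ Ι y x)).toReal := by
  have h_of_le : ∀ {x y : ℝ}, y ≤ x →
      |truncE x a b - truncE y a b| = (volume ({t : ℝ | a < t ∧ t < b} ∩ Ioc y x)).toReal :=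
    fun {x y} hyx => by
      have h_nonneg := sub_nonneg.mpr (monotone_truncE hab hyx)
      rw [volume_inter_Ioc_eq_ofReal_truncE_sub hab, ENNReal.toReal_ofReal h_nonneg,
        abs_of_nonneg h_nonneg]
  rcases le_total y x with hyx | hxy
  · rw [uIoc_of_le hyx, h_of_le hyx]
  · rw [uIoc_of_ge hxy, abs_sub_comm, h_of_le hxy]

end truncE

theorem gaussian_truncation_L1_concentration
    {Ω : Type*} [MeasurableSpace Ω] (P : Measure Ω) [IsProbabilityMeasure P]
    (X : Ω → ℝ) (hX : Measurable X) (hdist : P.map X = gaussianReal 0 1) :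
    ∃ cG : ℝ, ∀ a b : EReal, a < b →
      ∫ ω, |truncE (X ω) a b - ∫ ω', truncE (X ω') a b ∂P| ∂P
        ≤ cG * (P {ω | a < (X ω : EReal) ∧ (X ω : EReal) < b}).toReal := by
  refine ⟨2 * √(2 * π), fun a b hab => ?_⟩
  have hlaw : HasLaw X (gaussianReal 0 1) P := ⟨hX.aemeasurable, hdist⟩
  have hS : MeasurableSet {t : ℝ | a < t ∧ t < b} :=
    measurableSet_Ioo.preimage measurable_coe_real_ereal
  have hg : Measurable (truncE · a b) := (monotone_truncE hab).measurable
  have hmap : ∀ f : ℝ → ℝ, Measurable f → ∫ ω, f (X ω) ∂P = ∫ x, f x ∂gaussianReal 0 1 :=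
    fun f hf => hlaw.integral_comp hf.aestronglyMeasurable
  rw [hmap (truncE · a b) hg, hmap (fun x => |truncE x a b - _|) (by fun_prop),
    hlaw.measure_eq hS]
  exact gaussianReal_integral_abs_sub_integral_le hS hg fun x => (abs_truncE_sub_eq hab x 0).le
end

section
/- Let d ≥ 2 and let ω = (ω(v) : v ∈ ℤ^d) be i.i.d. integrable vertex weights which are not almost surely constant. Then lim_{N→∞} E[T(0, N(e₁+e₂))]/N exists (possibly +∞) and is strictly greater than 2·E[ω(0)]. Equivalently, the asymptotic last-passage time satisfies g(½e₁ + ½e₂) > g(e₂). -/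
open MeasureTheory ProbabilityTheory

/-- A directed step on `ℤ^d`: add one standard basis vector. -/
def DirStep (d : ℕ) (x y : Fin d → ℤ) : Prop :=
  ∃ i : Fin d, y = x + Pi.single i 1

/-- `γ` is a directed path from `x` to `y`:  the list `γ` of vertices visited after `x`
forms a chain of directed steps starting at `x` and ending at `y`. -/
def IsDirPath (d : ℕ) (x y : Fin d → ℤ) (γ : List (Fin d → ℤ)) : Prop :=
  List.Chain (DirStep d) x γ ∧ (x :: γ).getLast (List.cons_ne_nil x γ) = y

/-- The directed last-passage time from `x` to `y` for vertex weights `ω`: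
the maximal weight of a directed path from `x` to `y`, where the weight of a path is
the sum of the vertex weights along it, the starting point excluded. -/
noncomputable def lppT (d : ℕ) (ω : (Fin d → ℤ) → ℝ) (x y : Fin d → ℤ) : ℝ :=
  sSup {s : ℝ | ∃ γ : List (Fin d → ℤ), IsDirPath d x y γ ∧ s = (γ.map ω).sum}

/-! The sequence `N ↦ E T(0, N(e₁ + e₂))` is superadditive: an optimal path to `x` followed by an
optimal path from `x` to `x + y` is a path to `x + y`, and by the i.i.d. assumption the field seen
from `x` has the same law as the field seen from `0`. By Fekete's lemma, `E T(0, N(e₁ + e₂)) / N`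
converges to its supremum, which is at least `E T(0, e₁ + e₂)`. The paths through `e₁` and through
`e₂` give `T(0, e₁ + e₂) ≥ max (ω e₁) (ω e₂) + ω (e₁ + e₂)`, and `E max (ω e₁) (ω e₂) > E ω e₁`:
equality would force `ω e₁ = ω e₂` a.s., and a random variable that is a.s. equal to an
independent copy of itself is a.s. constant. -/

variable {d : ℕ} {x y z v : Fin d → ℤ} {γ γ₁ γ₂ : List (Fin d → ℤ)}

theorem DirStep.add_right (h : DirStep d x y) (u : Fin d → ℤ) : DirStep d (x + u) (y + u) := by
  obtain ⟨i, rfl⟩ := h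
  exact ⟨i, add_right_comm _ _ _⟩

theorem DirStep.sum_eq (h : DirStep d x y) : ∑ i, y i = ∑ i, x i + 1 := by
  obtain ⟨i, rfl⟩ := h
  simp [Finset.sum_add_distrib]

namespace IsDirPath

theorem nil (x : Fin d → ℤ) : IsDirPath d x x [] := ⟨List.IsChain.singleton x, rfl⟩

theorem nil_iff : IsDirPath d x y [] ↔ x = y := ⟨fun h => h.2, fun h => h ▸ nil x⟩

theorem cons_iff : IsDirPath d x y (v :: γ) ↔ DirStep d x v ∧ IsDirPath d v y γ := by
  change (x :: v :: γ).IsChain _ ∧ _ ↔ _ ∧ (v :: γ).IsChain _ ∧ _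
  rw [List.isChain_cons_cons, List.getLast_cons, and_assoc]

theorem append (h₁ : IsDirPath d x y γ₁) (h₂ : IsDirPath d y z γ₂) :
    IsDirPath d x z (γ₁ ++ γ₂) := by
  induction γ₁ generalizing x with
  | nil => rwa [nil_iff.1 h₁]
  | cons v γ ih =>
    rw [List.cons_append, cons_iff] at *
    exact ⟨h₁.1, ih h₁.2⟩

theorem map_add (h : IsDirPath d x y γ) (u : Fin d → ℤ) :
    IsDirPath d (x + u) (y + u) (γ.map (· + u)) := by
  induction γ generalizing x with
  | nil => rw [nil_iff.1 h]; exact nil _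
  | cons v γ ih =>
    rw [cons_iff] at h
    exact cons_iff.2 ⟨h.1.add_right u, ih h.2⟩

theorem length_eq (h : IsDirPath d x y γ) : (γ.length : ℤ) = ∑ i, y i - ∑ i, x i := by
  induction γ generalizing x with
  | nil => simp [nil_iff.1 h]
  | cons v γ ih =>
    rw [cons_iff] at h
    rw [List.length_cons, Nat.cast_succ, ih h.2, h.1.sum_eq]
    ring

end IsDirPath

theorem finite_setOf_isDirPath_length (n : ℕ) (x y : Fin d → ℤ) :
    {γ | IsDirPath d x y γ ∧ γ.length = n}.Finite := by
  induction n generalizing x with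
  | zero => exact (Set.finite_singleton []).subset fun γ h => List.length_eq_zero_iff.1 h.2
  | succ n ih =>
    refine (Set.finite_iUnion fun i => (ih (x + Pi.single i 1)).image
      (List.cons (x + Pi.single i 1))).subset ?_
    rintro (_ | ⟨v, γ⟩) ⟨hγ, hlen⟩
    · simp at hlen
    · obtain ⟨⟨i, rfl⟩, hγ⟩ := IsDirPath.cons_iff.1 hγ
      exact Set.mem_iUnion.2 ⟨i, γ, ⟨hγ, by simpa using hlen⟩, rfl⟩

theorem finite_setOf_isDirPath (x y : Fin d → ℤ) : {γ | IsDirPath d x y γ}.Finite :=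
  (finite_setOf_isDirPath_length (∑ i, y i - ∑ i, x i).toNat x y).subset fun γ h =>
    ⟨h, by have := h.length_eq; omega⟩

theorem isDirPath_single_add_single (i j : Fin d) :
    IsDirPath d 0 (Pi.single i 1 + Pi.single j 1) [Pi.single i 1, Pi.single i 1 + Pi.single j 1] :=
  IsDirPath.cons_iff.2 ⟨⟨i, (zero_add _).symm⟩, IsDirPath.cons_iff.2 ⟨⟨j, rfl⟩, IsDirPath.nil _⟩⟩

theorem exists_isDirPath_nsmul (h : ∃ γ, IsDirPath d 0 x γ) (N : ℕ) :
    ∃ γ, IsDirPath d 0 (N • x) γ := by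
  induction N with
  | zero => exact ⟨[], by simpa using IsDirPath.nil 0⟩
  | succ N ih =>
    obtain ⟨γ₁, h₁⟩ := ih
    obtain ⟨γ₂, h₂⟩ := h
    refine ⟨γ₁ ++ γ₂.map (· + N • x), h₁.append ?_⟩
    simpa only [zero_add, ← succ_nsmul'] using h₂.map_add (N • x)

section LastPassage

variable {ω : (Fin d → ℤ) → ℝ}

theorem lppT_eq_sSup_image (ω : (Fin d → ℤ) → ℝ) (x y : Fin d → ℤ) :
    lppT d ω x y = sSup ((fun γ => (γ.map ω).sum) '' {γ | IsDirPath d x y γ}) := by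
  simp only [lppT, Set.image, eq_comm, Set.mem_ofPred_eq]

theorem le_lppT (h : IsDirPath d x y γ) : (γ.map ω).sum ≤ lppT d ω x y := by
  rw [lppT_eq_sSup_image]
  exact le_csSup ((finite_setOf_isDirPath x y).image _).bddAbove ⟨γ, h, rfl⟩

theorem exists_isDirPath_lppT_eq (h : ∃ γ, IsDirPath d x y γ) (ω : (Fin d → ℤ) → ℝ) :
    ∃ γ, IsDirPath d x y γ ∧ lppT d ω x y = (γ.map ω).sum := by
  rw [lppT_eq_sSup_image]
  obtain ⟨γ, hγ, hsup⟩ :=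
    (Set.Nonempty.image (fun γ => (γ.map ω).sum) h).csSup_mem
      ((finite_setOf_isDirPath x y).image _)
  exact ⟨γ, hγ, hsup.symm⟩

theorem lppT_add_le (hxy : ∃ γ, IsDirPath d x y γ) (hyz : ∃ γ, IsDirPath d y z γ)
    (ω : (Fin d → ℤ) → ℝ) : lppT d ω x y + lppT d ω y z ≤ lppT d ω x z := by
  obtain ⟨γ₁, h₁, hT₁⟩ := exists_isDirPath_lppT_eq hxy ω
  obtain ⟨γ₂, h₂, hT₂⟩ := exists_isDirPath_lppT_eq hyz ω
  rw [hT₁, hT₂, ← List.sum_append, ← List.map_append]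
  exact le_lppT (h₁.append h₂)

theorem lppT_add_right (ω : (Fin d → ℤ) → ℝ) (x y u : Fin d → ℤ) :
    lppT d ω (x + u) (y + u) = lppT d (fun v => ω (v + u)) x y := by
  simp only [lppT]
  congr 1
  ext s
  constructor
  · rintro ⟨γ, hγ, rfl⟩
    refine ⟨γ.map (· + -u), by simpa using hγ.map_add (-u), ?_⟩
    simp [Function.comp_def]
  · rintro ⟨γ, hγ, rfl⟩
    exact ⟨γ.map (· + u), hγ.map_add u, by simp [Function.comp_def]⟩

theorem measurable_lppT (x y : Fin d → ℤ) :
    Measurable fun ω : (Fin d → ℤ) → ℝ => lppT d ω x y := by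
  have hsum (γ : List (Fin d → ℤ)) : Measurable fun ω : (Fin d → ℤ) → ℝ => (γ.map ω).sum := by
    induction γ with
    | nil => exact measurable_const
    | cons v γ ih => exact (measurable_pi_apply v).add ih
  have h (ω : (Fin d → ℤ) → ℝ) :
      lppT d ω x y = ⨆ γ : {γ // IsDirPath d x y γ}, ((γ : List _).map ω).sum := by
    rw [lppT_eq_sSup_image, Set.image_eq_range]
    rfl
  simp only [h]
  exact Measurable.iSup fun γ => hsum γ

theorem abs_lppT_le (ω : (Fin d → ℤ) → ℝ) (x y : Fin d → ℤ) :
    |lppT d ω x y| ≤ ∑ γ ∈ (finite_setOf_isDirPath x y).toFinset, |(γ.map ω).sum| := by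
  by_cases h : ∃ γ, IsDirPath d x y γ
  · obtain ⟨γ, hγ, hT⟩ := exists_isDirPath_lppT_eq h ω
    rw [hT]
    have hmem : γ ∈ (finite_setOf_isDirPath x y).toFinset := (Set.Finite.mem_toFinset _).2 hγ
    exact Finset.single_le_sum (fun γ _ => abs_nonneg (γ.map ω).sum) hmem
  · have hempty : {γ | IsDirPath d x y γ} = ∅ :=
      Set.eq_empty_of_forall_notMem fun γ hγ => h ⟨γ, hγ⟩
    have hT : lppT d ω x y = 0 := by
      rw [lppT_eq_sSup_image, hempty, Set.image_empty, Real.sSup_empty]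
    rw [hT, abs_zero]
    exact Finset.sum_nonneg fun _ _ => abs_nonneg _

theorem integrable_lppT {Ω : Type*} [MeasurableSpace Ω] {P : Measure Ω}
    {W : (Fin d → ℤ) → Ω → ℝ} (hmeas : ∀ v, Measurable (W v)) (hint : ∀ v, Integrable (W v) P)
    (x y : Fin d → ℤ) : Integrable (fun ωc => lppT d (fun v => W v ωc) x y) P := by
  have hpath : ∀ γ : List (Fin d → ℤ), Integrable (fun ωc => (γ.map fun v => W v ωc).sum) P := by
    intro γ
    induction γ with
    | nil => simp
    | cons v γ ih => exact (hint v).add ih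
  refine Integrable.mono'
    (integrable_finsetSum (finite_setOf_isDirPath x y).toFinset fun γ _ => (hpath γ).abs)
    ((measurable_lppT x y).comp (measurable_pi_lambda _ hmeas)).aestronglyMeasurable
    (ae_of_all _ fun ωc => ?_)
  simpa only [Real.norm_eq_abs] using abs_lppT_le (fun v => W v ωc) x y

end LastPassage

namespace ProbabilityTheory

theorem iIndepFun.identDistrib_precomp {ι Ω β : Type*} [MeasurableSpace Ω] [MeasurableSpace β]
    {P : Measure Ω} [IsProbabilityMeasure P] {X : ι → Ω → β} (hmeas : ∀ i, Measurable (X i))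
    (hindep : iIndepFun X P) {g : ι → ι} (hg : g.Injective)
    (hident : ∀ i, P.map (X (g i)) = P.map (X i)) :
    IdentDistrib (fun ω i => X (g i) ω) (fun ω i => X i ω) P P where
  aemeasurable_fst := (measurable_pi_lambda _ fun i => hmeas (g i)).aemeasurable
  aemeasurable_snd := (measurable_pi_lambda _ hmeas).aemeasurable
  map_eq := by
    rw [(hindep.precomp hg).map_fun_eq_infinitePi_map fun i => hmeas (g i),
      hindep.map_fun_eq_infinitePi_map hmeas]
    simp only [hident]

variable {Ω : Type*} [MeasurableSpace Ω] {P : Measure Ω} [IsProbabilityMeasure P] {X Y : Ω → ℝ}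

theorem IndepFun.exists_ae_eq_const_of_ae_eq (hX : AEMeasurable X P) (hind : IndepFun X Y P)
    (hXY : X =ᵐ[P] Y) : ∃ c : ℝ, X =ᵐ[P] fun _ => c := by
  have : IsZeroOneMeasure (P.map X) := by
    refine ⟨fun s hs => ?_⟩
    rw [Measure.map_apply_of_aemeasurable hX hs]
    -- `X` is independent of `Y =ᵐ X`, hence of itself: `P (X ⁻¹' s) = P (X ⁻¹' s) ^ 2`.
    have hself : P (X ⁻¹' s) * P (X ⁻¹' s) = P (X ⁻¹' s) * 1 := by
      rw [mul_one]
      conv_rhs => rw [← Set.inter_self (X ⁻¹' s)]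
      rw [measure_congr ((Filter.EventuallyEq.refl _ _).inter (hXY.preimage s)),
        hind.measure_inter_preimage_eq_mul s s hs hs, measure_congr (hXY.preimage s)]
    by_cases h0 : P (X ⁻¹' s) = 0
    · exact Or.inl h0
    · exact Or.inr ((ENNReal.mul_right_inj h0 (measure_ne_top _ _)).1 hself)
  have := Measure.isProbabilityMeasure_map (μ := P) hX
  obtain ⟨c, hc⟩ := IsZeroOneMeasure.exists_eq_dirac (μ := P.map X)
  refine ⟨c, ae_of_ae_map (p := (· = c)) hX ?_⟩
  rw [hc, ae_dirac_eq]
  exact Filter.eventually_pure.2 rfl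

theorem IndepFun.integral_lt_integral_max (hind : IndepFun X Y P) (hid : IdentDistrib X Y P P)
    (hX : Integrable X P) (hnc : ¬ ∃ c : ℝ, X =ᵐ[P] fun _ => c) :
    ∫ ω, X ω ∂P < ∫ ω, max (X ω) (Y ω) ∂P := by
  have hY : Integrable Y P := hid.integrable_snd hX
  have hmax : Integrable (fun ω => max (X ω) (Y ω)) P := hX.sup hY
  refine (integral_mono hX hmax fun ω => le_max_left _ _).lt_of_ne fun hXmax => hnc ?_
  have hYmax : ∫ ω, Y ω ∂P = ∫ ω, max (X ω) (Y ω) ∂P := hid.integral_eq.symm.trans hXmax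
  have hXY : X =ᵐ[P] Y := by
    filter_upwards [(integral_eq_iff_of_ae_le hX hmax (ae_of_all _ fun ω => le_max_left _ _)).1
        hXmax, (integral_eq_iff_of_ae_le hY hmax (ae_of_all _ fun ω => le_max_right _ _)).1
        hYmax] with ω hXω hYω
    exact hXω.trans hYω.symm
  exact hind.exists_ae_eq_const_of_ae_eq hid.aemeasurable_fst hXY

end ProbabilityTheory

open Filter Topology

-- The supremum skips `n = 0`, where `a 0 / 0 = 0` is a junk value.
theorem tendsto_div_iSup_of_superadditive {a : ℕ → ℝ} (h : ∀ m n, a m + a n ≤ a (m + n)) :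
    Tendsto (fun n : ℕ => ((a n / n : ℝ) : EReal)) atTop
      (𝓝 (⨆ n : ℕ, ((a (n + 1) / (n + 1 : ℕ) : ℝ) : EReal))) := by
  have hsub : Subadditive (-a) := fun m n => by
    simp only [Pi.neg_apply]
    linarith [h m n]
  refine tendsto_order.2 ⟨fun b hb => ?_, fun b hb => ?_⟩
  · obtain ⟨k, hk⟩ := lt_iSup_iff.1 hb
    obtain ⟨c, hbc, hck⟩ := EReal.lt_iff_exists_real_btwn.1 hk
    have hck' : (-a) (k + 1) / (k + 1 : ℕ) < -c := by
      rw [Pi.neg_apply, neg_div, neg_lt_neg_iff]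
      exact_mod_cast hck
    filter_upwards [hsub.eventually_div_lt_of_div_lt k.succ_ne_zero hck'] with n hn
    rw [Pi.neg_apply, neg_div, neg_lt_neg_iff] at hn
    exact hbc.trans (EReal.coe_lt_coe_iff.2 hn)
  · filter_upwards [eventually_ge_atTop 1] with n hn
    obtain ⟨k, rfl⟩ := Nat.exists_eq_add_of_le' hn
    exact (le_iSup (fun k : ℕ => ((a (k + 1) / (k + 1 : ℕ) : ℝ) : EReal)) k).trans_lt hb

section IIDWeights

variable {Ω : Type*} [MeasurableSpace Ω] {P : Measure Ω} [IsProbabilityMeasure P]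
  {W : (Fin d → ℤ) → Ω → ℝ}

theorem integral_lppT_add_le (hmeas : ∀ v, Measurable (W v)) (hindep : iIndepFun W P)
    (hident : ∀ v, P.map (W v) = P.map (W 0)) (hint : ∀ v, Integrable (W v) P)
    (hx : ∃ γ, IsDirPath d 0 x γ) (hy : ∃ γ, IsDirPath d 0 y γ) :
    ∫ ωc, lppT d (fun v => W v ωc) 0 x ∂P + ∫ ωc, lppT d (fun v => W v ωc) 0 y ∂P
      ≤ ∫ ωc, lppT d (fun v => W v ωc) 0 (x + y) ∂P := by
  have hxy : ∃ γ, IsDirPath d x (x + y) γ := by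
    obtain ⟨γ, hγ⟩ := hy
    exact ⟨γ.map (· + x), by simpa only [zero_add, add_comm y] using hγ.map_add x⟩
  have hshift : ∫ ωc, lppT d (fun v => W v ωc) x (x + y) ∂P
      = ∫ ωc, lppT d (fun v => W v ωc) 0 y ∂P := by
    have hlaw := (hindep.identDistrib_precomp hmeas (add_left_injective x) fun v =>
      (hident (v + x)).trans (hident v).symm).comp (measurable_lppT 0 y)
    refine Eq.trans (integral_congr_ae (ae_of_all _ fun ωc => ?_)) hlaw.integral_eq
    simpa only [Function.comp_apply, zero_add, add_comm y] using
      lppT_add_right (fun v => W v ωc) 0 y x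
  rw [← hshift, ← integral_add (integrable_lppT hmeas hint _ _) (integrable_lppT hmeas hint _ _)]
  exact integral_mono ((integrable_lppT hmeas hint _ _).add (integrable_lppT hmeas hint _ _))
    (integrable_lppT hmeas hint _ _) fun ωc => lppT_add_le hx hxy _

theorem exists_tendsto_integral_lppT_nsmul_div (hmeas : ∀ v, Measurable (W v))
    (hindep : iIndepFun W P) (hident : ∀ v, P.map (W v) = P.map (W 0))
    (hint : ∀ v, Integrable (W v) P) (hx : ∃ γ, IsDirPath d 0 x γ) :
    ∃ L : EReal, Tendsto (fun N : ℕ =>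
        (((∫ ωc, lppT d (fun v => W v ωc) 0 (N • x) ∂P) / N : ℝ) : EReal)) atTop (𝓝 L) ∧
      ((∫ ωc, lppT d (fun v => W v ωc) 0 x ∂P : ℝ) : EReal) ≤ L := by
  refine ⟨_, tendsto_div_iSup_of_superadditive fun m n => ?_, le_iSup_of_le 0 (by simp)⟩
  simpa only [add_nsmul] using integral_lppT_add_le hmeas hindep hident hint
    (exists_isDirPath_nsmul hx m) (exists_isDirPath_nsmul hx n)

theorem two_mul_integral_lt_integral_lppT (hmeas : ∀ v, Measurable (W v))
    (hindep : iIndepFun W P) (hident : ∀ v, P.map (W v) = P.map (W 0))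
    (hint : ∀ v, Integrable (W v) P) (hrandom : ¬ ∃ r : ℝ, W 0 =ᵐ[P] fun _ => r)
    {i j : Fin d} (hij : i ≠ j) :
    2 * ∫ ωc, W 0 ωc ∂P
      < ∫ ωc, lppT d (fun v => W v ωc) 0 (Pi.single i 1 + Pi.single j 1) ∂P := by
  set eᵢ : Fin d → ℤ := Pi.single i 1
  set eⱼ : Fin d → ℤ := Pi.single j 1
  have hid (v : Fin d → ℤ) : IdentDistrib (W v) (W 0) P P :=
    ⟨(hmeas v).aemeasurable, (hmeas 0).aemeasurable, hident v⟩
  have hrandomᵢ : ¬ ∃ c : ℝ, W eᵢ =ᵐ[P] fun _ => c := fun ⟨c, hc⟩ =>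
    hrandom ⟨c, (hid eᵢ).ae_snd (measurableSet_singleton c) hc⟩
  have hne : eᵢ ≠ eⱼ := fun h => by simpa [eᵢ, eⱼ, hij] using congrFun h i
  have hmax := (hindep.indepFun hne).integral_lt_integral_max
    ((hid eᵢ).trans (hid eⱼ).symm) (hint eᵢ) hrandomᵢ
  have hlower (ωc : Ω) : max (W eᵢ ωc) (W eⱼ ωc) + W (eᵢ + eⱼ) ωc
      ≤ lppT d (fun v => W v ωc) 0 (eᵢ + eⱼ) := by
    have hᵢ := le_lppT (ω := fun v => W v ωc) (isDirPath_single_add_single i j)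
    have hⱼ := le_lppT (ω := fun v => W v ωc) (isDirPath_single_add_single j i)
    rw [add_comm eⱼ] at hⱼ
    simp only [List.map_cons, List.map_nil, List.sum_cons, List.sum_nil, add_zero] at hᵢ hⱼ
    exact max_add_add_right (W eᵢ ωc) (W eⱼ ωc) _ ▸ max_le hᵢ hⱼ
  have hintmax : Integrable (fun ωc => max (W eᵢ ωc) (W eⱼ ωc)) P := (hint eᵢ).sup (hint eⱼ)
  calc 2 * ∫ ωc, W 0 ωc ∂P = ∫ ωc, W eᵢ ωc ∂P + ∫ ωc, W (eᵢ + eⱼ) ωc ∂P := by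
        rw [(hid eᵢ).integral_eq, (hid (eᵢ + eⱼ)).integral_eq, two_mul]
    _ < ∫ ωc, max (W eᵢ ωc) (W eⱼ ωc) ∂P + ∫ ωc, W (eᵢ + eⱼ) ωc ∂P := by linarith
    _ = ∫ ωc, max (W eᵢ ωc) (W eⱼ ωc) + W (eᵢ + eⱼ) ωc ∂P :=
        (integral_add hintmax (hint _)).symm
    _ ≤ _ := integral_mono (hintmax.add (hint _)) (integrable_lppT hmeas hint _ _) hlower

end IIDWeights

open Filter in
theorem strict_concavity_diagonal
    (d : ℕ) (hd : 2 ≤ d)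
    {Ω : Type*} [MeasurableSpace Ω] (P : Measure Ω) [IsProbabilityMeasure P]
    (W : (Fin d → ℤ) → Ω → ℝ)
    (hmeas : ∀ v, Measurable (W v))
    (hindep : iIndepFun W P)
    (hident : ∀ v, P.map (W v) = P.map (W 0))
    (hint : ∀ v, Integrable (W v) P)
    (hrandom : ¬ ∃ r : ℝ, W 0 =ᵐ[P] fun _ => r) :
    ∃ L : EReal,
      Tendsto
        (fun N : ℕ =>
          (((∫ ωc, lppT d (fun v => W v ωc) 0
              (fun i => if i.val < 2 then (N : ℤ) else 0) ∂P) / N : ℝ) : EReal))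
        atTop (nhds L)
      ∧ ((2 * ∫ ωc, W 0 ωc ∂P : ℝ) : EReal) < L := by
  let i : Fin d := ⟨0, by omega⟩
  let j : Fin d := ⟨1, by omega⟩
  have hij : i ≠ j := by simp [i, j, Fin.ext_iff]
  have hdiag (N : ℕ) : (fun k : Fin d => if k.val < 2 then (N : ℤ) else 0)
      = N • (Pi.single i 1 + Pi.single j 1) := by
    funext k
    simp only [i, j, Pi.smul_apply, Pi.add_apply, Pi.single_apply, Fin.ext_iff, nsmul_eq_mul]
    split_ifs <;> omega
  obtain ⟨L, hlim, hL⟩ := exists_tendsto_integral_lppT_nsmul_div hmeas hindep hident hint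
    ⟨_, isDirPath_single_add_single i j⟩
  simp only [hdiag]
  exact ⟨L, hlim, (EReal.coe_lt_coe_iff.2
    (two_mul_integral_lt_integral_lppT hmeas hindep hident hint hrandom hij)).trans_le hL⟩
end
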